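/- arXiv:2502.12818 — 2 statements merged into one kernel-verified Lean document; each statement's English description precedes it below -/
import Mathlib

section
/- Let n ≥ 2 and let χ(1) = |Ψ_n⟩⟨Ψ_n| − (I_n/n) ⊗ (I_n/n) be the correlation part of the maximally entangled state on ℂ^n ⊗ ℂ^n. If ρ is a density matrix on ℂ^n such that ρ ⊗ (I_n/n) + χ(1) is positive semidefinite, then ρ = I_n/n; i.e., the maximally mixed state is the unique compatible reduced system state. -/
open Matrix
open scoped Kronecker ComplexOrder

/-- The maximally entangled state `Ψ_n = (1/√n) Σ_k e_k ⊗ e_k` on `ℂ^n ⊗ ℂ^n`. -/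
noncomputable def maxEntVec (n : ℕ) : Fin n × Fin n → ℂ :=
  fun p => if p.1 = p.2 then ((Real.sqrt n : ℂ))⁻¹ else 0

/-- The rank-one projection `|Ψ_n⟩⟨Ψ_n|`. -/
noncomputable def maxEntProj (n : ℕ) : Matrix (Fin n × Fin n) (Fin n × Fin n) ℂ :=
  Matrix.vecMulVec (maxEntVec n) (star (maxEntVec n))

/-- The maximally mixed state `I_n / n`. -/
noncomputable def maxMixed (n : ℕ) : Matrix (Fin n) (Fin n) ℂ := (n : ℂ)⁻¹ • 1

/-!
Write the operator as `(ρ - I/n) ⊗ I/n + |Ψ⟩⟨Ψ|`. The projection `|Ψ⟩⟨Ψ|` vanishes on every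
column indexed by `e_k ⊗ e_l` with `k ≠ l`, and such an `l` exists for each `k` since `n ≥ 2`.
The diagonal entry there is `(ρ_kk - 1/n)/n ≥ 0`; as `tr ρ = 1`, all these inequalities are
equalities. A positive semidefinite matrix with a zero diagonal entry has a zero column, and the
`(e_i ⊗ e_l)`-entry of that column is `(ρ_ik - δ_ik/n)/n`.
-/

namespace Matrix.PosSemidef

variable {𝕜 ι : Type*} [RCLike 𝕜] [Fintype ι]

lemma apply_eq_zero_of_diag_eq_zero {A : Matrix ι ι 𝕜} (hA : A.PosSemidef) {j : ι}
    (hj : A j j = 0) (i : ι) : A i j = 0 := by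
  classical
  have hcol : A *ᵥ Pi.single j 1 = 0 := by
    rw [← hA.dotProduct_mulVec_zero_iff, mulVec_single_one]
    simpa [dotProduct, Pi.single_apply] using hj
  simpa using congrFun hcol i

end Matrix.PosSemidef

lemma maxMixed_apply (n : ℕ) (i j : Fin n) :
    maxMixed n i j = if i = j then (n : ℂ)⁻¹ else 0 := by
  simp [maxMixed, one_apply]

lemma trace_maxMixed {n : ℕ} (hn : n ≠ 0) : (maxMixed n).trace = 1 := by
  simp [maxMixed, hn]

lemma maxEntProj_apply_eq_zero {n : ℕ} (p : Fin n × Fin n) {q : Fin n × Fin n}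
    (hq : q.1 ≠ q.2) : maxEntProj n p q = 0 := by
  simp [maxEntProj, maxEntVec, vecMulVec_apply, hq]

lemma kronecker_maxMixed_add_correlation_apply {n : ℕ} (ρ : Matrix (Fin n) (Fin n) ℂ)
    (i : Fin n) {k l : Fin n} (hkl : k ≠ l) :
    (ρ ⊗ₖ maxMixed n + (maxEntProj n - maxMixed n ⊗ₖ maxMixed n)) (i, l) (k, l) =
      (ρ - maxMixed n) i k * (n : ℂ)⁻¹ := by
  rw [Matrix.add_apply, Matrix.sub_apply, maxEntProj_apply_eq_zero (i, l) (q := (k, l)) hkl]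
  simp only [Matrix.sub_apply, kroneckerMap_apply, maxMixed_apply, if_pos]
  ring

lemma diag_sub_maxMixed_eq_zero {n : ℕ} (hn : 2 ≤ n) {ρ : Matrix (Fin n) (Fin n) ℂ}
    (hρtr : ρ.trace = 1)
    (hpos : (ρ ⊗ₖ maxMixed n + (maxEntProj n - maxMixed n ⊗ₖ maxMixed n)).PosSemidef)
    (k : Fin n) : (ρ - maxMixed n) k k = 0 := by
  have : Nontrivial (Fin n) := Fin.nontrivial_iff_two_le.mpr hn
  have hdiag_nonneg (k : Fin n) : 0 ≤ (ρ - maxMixed n) k k := by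
    obtain ⟨l, hl⟩ := exists_ne k
    have h := hpos.diag_nonneg (i := (k, l))
    rw [kronecker_maxMixed_add_correlation_apply ρ k hl.symm] at h
    simpa [show n ≠ 0 by omega] using mul_nonneg h (Nat.cast_nonneg (α := ℂ) n)
  have htrace : (ρ - maxMixed n).trace = 0 := by
    rw [trace_sub, hρtr, trace_maxMixed (by omega), sub_self]
  exact (Finset.sum_eq_zero_iff_of_nonneg fun k _ => hdiag_nonneg k).mp htrace k
    (Finset.mem_univ k)

theorem stmt1_general (n : ℕ) (hn : 2 ≤ n)
    (ρ : Matrix (Fin n) (Fin n) ℂ) (hρtr : ρ.trace = 1)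
    (hpos : (ρ ⊗ₖ maxMixed n + (maxEntProj n - maxMixed n ⊗ₖ maxMixed n)).PosSemidef) :
    ρ = maxMixed n := by
  have : Nontrivial (Fin n) := Fin.nontrivial_iff_two_le.mpr hn
  rw [← sub_eq_zero]
  ext i k
  obtain ⟨l, hl⟩ := exists_ne k
  have hcol := hpos.apply_eq_zero_of_diag_eq_zero (j := (k, l)) (by
    rw [kronecker_maxMixed_add_correlation_apply ρ k hl.symm,
      diag_sub_maxMixed_eq_zero hn hρtr hpos, zero_mul]) (i, l)
  rw [kronecker_maxMixed_add_correlation_apply ρ i hl.symm] at hcol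
  simpa [show n ≠ 0 by omega] using hcol

theorem stmt1 (n : ℕ) (hn : 2 ≤ n)
    (ρ : Matrix (Fin n) (Fin n) ℂ) (hρ : ρ.PosSemidef) (hρtr : ρ.trace = 1)
    (hpos : (ρ ⊗ₖ maxMixed n + (maxEntProj n - maxMixed n ⊗ₖ maxMixed n)).PosSemidef) :
    ρ = maxMixed n :=
  stmt1_general n hn ρ hρtr hpos
end

section
/- Let n ≥ 2, 0 ≤ λ ≤ 1, and let ρ be a Hermitian matrix on ℂ^n. If the matrix ρ ⊗ (I_n/n) + λ(|Ψ_n⟩⟨Ψ_n| − (I_n/n) ⊗ (I_n/n)) is positive semidefinite, then ρ − λ·(I_n/n) is positive semidefinite. -/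
open Matrix
open scoped Kronecker ComplexOrder

/-!
Given `v`, choose `w ≠ 0` with `∑ₖ vₖ wₖ = 0` (no conjugation), possible as soon as `n ≥ 2`.
Then `v ⊗ w` is orthogonal to `Ψ_n`. Writing the hypothesis matrix as
`(ρ - λ I/n) ⊗ I/n + λ |Ψ_n⟩⟨Ψ_n|`, its quadratic form at `v ⊗ w` is therefore
`⟨v, (ρ - λ I/n) v⟩ · ‖w‖² / n`, which is nonnegative; as `‖w‖² / n > 0`, so is
`⟨v, (ρ - λ I/n) v⟩`.
-/

namespace Matrix

variable {R : Type*} {l m n p : Type*}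

def kroneckerVec [Mul R] (v : m → R) (w : n → R) : m × n → R := fun q => v q.1 * w q.2

section CommSemiring

variable [CommSemiring R] [Fintype m] [Fintype n]

theorem kroneckerVec_dotProduct_kroneckerVec (v v' : m → R) (w w' : n → R) :
    kroneckerVec v w ⬝ᵥ kroneckerVec v' w' = (v ⬝ᵥ v') * (w ⬝ᵥ w') := by
  simp only [kroneckerVec, dotProduct, Fintype.sum_prod_type, Finset.sum_mul_sum]
  exact Finset.sum_congr rfl fun _ _ => Finset.sum_congr rfl fun _ _ => by ring

theorem kronecker_mulVec_kroneckerVec (A : Matrix m m R) (B : Matrix n n R) (v : m → R)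
    (w : n → R) : (A ⊗ₖ B) *ᵥ kroneckerVec v w = kroneckerVec (A *ᵥ v) (B *ᵥ w) := by
  ext q
  exact kroneckerVec_dotProduct_kroneckerVec (A q.1) v (B q.2) w

omit [Fintype m] [Fintype n] in
theorem star_kroneckerVec [StarRing R] (v : m → R) (w : n → R) :
    star (kroneckerVec v w) = kroneckerVec (star v) (star w) := by
  ext q
  simp only [kroneckerVec, Pi.star_apply, star_mul']

theorem star_kroneckerVec_dotProduct_kronecker_mulVec [StarRing R] (A : Matrix m m R)
    (B : Matrix n n R) (v : m → R) (w : n → R) :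
    star (kroneckerVec v w) ⬝ᵥ (A ⊗ₖ B) *ᵥ kroneckerVec v w
      = (star v ⬝ᵥ A *ᵥ v) * (star w ⬝ᵥ B *ᵥ w) := by
  rw [kronecker_mulVec_kroneckerVec, star_kroneckerVec, kroneckerVec_dotProduct_kroneckerVec]

end CommSemiring

theorem kronecker_add_smul_sub_kronecker [CommRing R] (A A' : Matrix l m R) (B : Matrix n p R)
    (P : Matrix (l × n) (m × p) R) (c : R) :
    A ⊗ₖ B + c • (P - A' ⊗ₖ B) = (A - c • A') ⊗ₖ B + c • P := by
  ext ⟨i, j⟩ ⟨k, k'⟩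
  simp only [add_apply, sub_apply, smul_apply, kroneckerMap_apply, smul_eq_mul]
  ring

theorem exists_ne_zero_dotProduct_eq_zero {K : Type*} [Field K] [Fintype m]
    (hm : 1 < Fintype.card m) (v : m → K) : ∃ w ≠ 0, v ⬝ᵥ w = 0 := by
  have hker : LinearMap.ker (dotProductBilin K K v) ≠ ⊥ :=
    LinearMap.ker_ne_bot_of_finrank_lt <| by
      rwa [Module.finrank_self, Module.finrank_fintype_fun_eq_card]
  obtain ⟨w, hw, hw0⟩ := (Submodule.ne_bot_iff _).mp hker
  exact ⟨w, hw0, hw⟩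

end Matrix

theorem RCLike.nonneg_of_mul_nonneg_left {K : Type*} [RCLike K] {a b : K} (h : 0 ≤ a * b)
    (hb : 0 < b) : 0 ≤ a := by
  simpa [hb.ne'] using mul_nonneg h (RCLike.inv_pos_of_pos hb).le

theorem star_maxEntVec_dotProduct_kroneckerVec (n : ℕ) (v w : Fin n → ℂ) :
    star (maxEntVec n) ⬝ᵥ kroneckerVec v w = (Real.sqrt n : ℂ)⁻¹ * (v ⬝ᵥ w) := by
  simp [maxEntVec, kroneckerVec, dotProduct, Fintype.sum_prod_type, apply_ite, Finset.mul_sum]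

theorem maxEntProj_mulVec_kroneckerVec_of_dotProduct_eq_zero {n : ℕ} {v w : Fin n → ℂ}
    (h : v ⬝ᵥ w = 0) : maxEntProj n *ᵥ kroneckerVec v w = 0 := by
  rw [maxEntProj, vecMulVec_mulVec, star_maxEntVec_dotProduct_kroneckerVec, h, mul_zero,
    MulOpposite.op_zero, zero_smul]

theorem maxMixed_posDef {n : ℕ} (hn : n ≠ 0) : (maxMixed n).PosDef :=
  PosDef.one.smul (RCLike.inv_pos_of_pos (by exact_mod_cast Nat.pos_of_ne_zero hn))

theorem stmt2_general (n : ℕ) (hn : 2 ≤ n) (lam : ℝ)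
    (ρ : Matrix (Fin n) (Fin n) ℂ) (hρ : ρ.IsHermitian)
    (hpos : (ρ ⊗ₖ maxMixed n + (lam : ℂ) • (maxEntProj n - maxMixed n ⊗ₖ maxMixed n)).PosSemidef) :
    (ρ - (lam : ℂ) • maxMixed n).PosSemidef := by
  rw [kronecker_add_smul_sub_kronecker] at hpos
  have hmixed := maxMixed_posDef (n := n) (by omega)
  refine .of_dotProduct_mulVec_nonneg (hρ.sub (hmixed.isHermitian.smul (Complex.conj_ofReal lam)))
    fun v => ?_
  obtain ⟨w, hw0, hvw⟩ :=
    exists_ne_zero_dotProduct_eq_zero (by simp only [Fintype.card_fin]; omega) v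
  have hx := hpos.dotProduct_mulVec_nonneg (kroneckerVec v w)
  rw [add_mulVec, smul_mulVec, maxEntProj_mulVec_kroneckerVec_of_dotProduct_eq_zero hvw,
    smul_zero, add_zero, star_kroneckerVec_dotProduct_kronecker_mulVec] at hx
  exact RCLike.nonneg_of_mul_nonneg_left hx (hmixed.dotProduct_mulVec_pos hw0)

theorem stmt2 (n : ℕ) (hn : 2 ≤ n) (lam : ℝ) (hlam0 : 0 ≤ lam) (hlam1 : lam ≤ 1)
    (ρ : Matrix (Fin n) (Fin n) ℂ) (hρ : ρ.IsHermitian)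
    (hpos : (ρ ⊗ₖ maxMixed n + (lam : ℂ) • (maxEntProj n - maxMixed n ⊗ₖ maxMixed n)).PosSemidef) :
    (ρ - (lam : ℂ) • maxMixed n).PosSemidef :=
  stmt2_general n hn lam ρ hρ hpos
end
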